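/- Let d, n_o, n_u be positive integers with n = n_o + n_u, let λ > 0, P₁ ∈ [0,1], let x_1, ..., x_{n_o} ∈ ℝ^d be labeled observations with labels y_1, ..., y_{n_o} ∈ {-1,1} such that y_i = -1 for some i and y_j = 1 for some j, and let x_1^u, ..., x_{n_u}^u ∈ ℝ^d be unlabeled observations. Then the semi-supervised unnormalized posterior h(β₀, β) = [∏_{i=1}^{n_u} ( P₁ exp(-V(β₀ + (x_i^u)ᵀβ)) + (1-P₁) exp(-V(-β₀ - (x_i^u)ᵀβ)) )] · [∏_{i=1}^{n_o} exp(-V(y_i(β₀ + x_iᵀβ)))] · exp(-(λn/2)‖β‖₂²) is integrable over (β₀, β) ∈ ℝ × ℝ^d. -/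

import Mathlib

/-!
Since `V ≥ 0`, every unlabeled factor is a convex combination of two numbers in `[0, 1]`, so the
unlabeled product is at most `1`. Since moreover `V u ≥ -u / 2`, an observation `xᵢ` labeled `-1`
and an observation `xⱼ` labeled `+1` already force `∑ V (yₖ (β₀ + ⟪xₖ, β⟫)) ≥ (|β₀| - C ‖β‖) / 2`
with `C = ‖xᵢ‖ + ‖xⱼ‖`. Hence the integrand is dominated by
`exp (-|β₀| / 2) * exp (C ‖β‖ / 2 - (λ n / 2) ‖β‖²)`, a Laplace density in `β₀` times a function
bounded by a Gaussian in `β`.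
-/

open MeasureTheory Set Filter
open scoped RealInnerProductSpace

/-- The DWD loss function. -/
noncomputable def V (u : ℝ) : ℝ := if u ≤ 1/2 then 1 - u else 1/(4*u)

lemma V_nonneg (u : ℝ) : 0 ≤ V u := by
  unfold V
  split_ifs with h
  · linarith
  · have : 0 < u := by linarith
    positivity

lemma neg_div_two_le_V (u : ℝ) : -u / 2 ≤ V u := by
  unfold V
  split_ifs with h
  · linarith
  · have : 0 < u := by linarith
    have : 0 < 1 / (4 * u) := by positivity
    linarith

@[fun_prop]
lemma measurable_V : Measurable V :=
  Measurable.ite measurableSet_Iic (by fun_prop) (by fun_prop)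

lemma exp_neg_V_mem_Icc (u : ℝ) : Real.exp (-V u) ∈ Icc (0 : ℝ) 1 :=
  ⟨(Real.exp_pos _).le, Real.exp_le_one_iff.2 (neg_nonpos.2 (V_nonneg u))⟩

lemma half_abs_sub_le_V_neg_add_V (t a b : ℝ) :
    (|t| - |a| - |b|) / 2 ≤ V (-(t + a)) + V (t + b) := by
  have h₁ := neg_div_two_le_V (-(t + a))
  have h₂ := neg_div_two_le_V (t + b)
  have h₃ := V_nonneg (-(t + a))
  have h₄ := V_nonneg (t + b)
  rcases abs_cases t with ⟨ht, -⟩ | ⟨ht, -⟩ <;>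
    linarith [neg_abs_le a, le_abs_self b, abs_nonneg a, abs_nonneg b]

section Margins

variable {ι E : Type*} [Fintype ι] [NormedAddCommGroup E] [InnerProductSpace ℝ E]

lemma half_abs_sub_le_sum_V_margin (x : ι → E) (y : ι → ℝ) {i j : ι} (hi : y i = -1)
    (hj : y j = 1) (t : ℝ) (β : E) :
    (|t| - (‖x i‖ + ‖x j‖) * ‖β‖) / 2 ≤ ∑ k, V (y k * (t + ⟪x k, β⟫)) := by
  classical
  have hij : i ≠ j := fun h => by norm_num [h, hj] at hi
  have hpair : V (y i * (t + ⟪x i, β⟫)) + V (y j * (t + ⟪x j, β⟫)) ≤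
      ∑ k, V (y k * (t + ⟪x k, β⟫)) := by
    rw [← Finset.sum_pair (f := fun k => V (y k * (t + ⟪x k, β⟫))) hij]
    exact Finset.sum_le_sum_of_subset_of_nonneg (Finset.subset_univ _)
      fun k _ _ => V_nonneg _
  rw [hi, hj, neg_one_mul, one_mul] at hpair
  linarith [half_abs_sub_le_V_neg_add_V t ⟪x i, β⟫ ⟪x j, β⟫, abs_real_inner_le_norm (x i) β,
    abs_real_inner_le_norm (x j) β]

lemma prod_exp_neg_V_margin_le (x : ι → E) (y : ι → ℝ) {i j : ι} (hi : y i = -1)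
    (hj : y j = 1) (t : ℝ) (β : E) :
    ∏ k, Real.exp (-V (y k * (t + ⟪x k, β⟫))) ≤
      Real.exp (-(1 / 2) * |t| + (‖x i‖ + ‖x j‖) / 2 * ‖β‖) := by
  rw [← Real.exp_sum, Real.exp_le_exp, Finset.sum_neg_distrib]
  linarith [half_abs_sub_le_sum_V_margin x y hi hj t β]

end Margins

lemma prod_mixture_exp_neg_V_mem_Icc {ι : Type*} [Fintype ι] {P : ℝ} (hP : P ∈ Icc (0 : ℝ) 1)
    (a b : ι → ℝ) :
    ∏ k, (P * Real.exp (-V (a k)) + (1 - P) * Real.exp (-V (b k))) ∈ Icc (0 : ℝ) 1 := by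
  have hmem : ∀ k, P * Real.exp (-V (a k)) + (1 - P) * Real.exp (-V (b k)) ∈ Icc (0 : ℝ) 1 :=
    fun k => convex_Icc (0 : ℝ) 1 (exp_neg_V_mem_Icc _) (exp_neg_V_mem_Icc _) hP.1
      (sub_nonneg.2 hP.2) (by ring)
  exact ⟨Finset.prod_nonneg fun k _ => (hmem k).1, Finset.prod_le_one (fun k _ => (hmem k).1)
    fun k _ => (hmem k).2⟩

lemma integrable_exp_neg_mul_abs {b : ℝ} (hb : 0 < b) :
    Integrable fun t : ℝ => Real.exp (-b * |t|) := by
  have hloc : LocallyIntegrable fun t : ℝ => Real.exp (-b * |t|) :=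
    (by fun_prop : Continuous _).locallyIntegrable
  refine hloc.integrable_of_isBigO_atTop_of_norm_isNegInvariant (g := fun t => Real.exp (-b * t))
    (ae_of_all _ fun t => by simp) ?_ ⟨Ioi 0, Ioi_mem_atTop 0, exp_neg_integrableOn_Ioi 0 hb⟩
  refine EventuallyEq.isBigO ?_
  filter_upwards [eventually_ge_atTop 0] with t ht
  rw [abs_of_nonneg ht]

lemma integrable_exp_mul_norm_sub_mul_sq_norm {E : Type*} [NormedAddCommGroup E]
    [InnerProductSpace ℝ E] [FiniteDimensional ℝ E] [MeasurableSpace E] [BorelSpace E]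
    (a : ℝ) {c : ℝ} (hc : 0 < c) :
    Integrable fun v : E => Real.exp (a * ‖v‖ - c * ‖v‖ ^ 2) := by
  have hgauss : Integrable fun v : E => Real.exp (-(c / 2) * ‖v‖ ^ 2) := by
    have := (GaussianFourier.integrable_cexp_neg_mul_sq_norm_add (V := E) (b := ((c / 2 : ℝ) : ℂ))
      (by simpa using hc) 0 0).norm
    refine this.congr (ae_of_all _ fun v => ?_)
    simp [Complex.norm_exp, ← Complex.ofReal_pow]
  refine (hgauss.const_mul (Real.exp (a ^ 2 / (2 * c)))).mono' (by fun_prop)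
    (ae_of_all _ fun v => ?_)
  rw [Real.norm_of_nonneg (Real.exp_pos _).le, ← Real.exp_add, Real.exp_le_exp]
  have : 0 ≤ (c * ‖v‖ - a) ^ 2 / (2 * c) := by positivity
  have key : (c * ‖v‖ - a) ^ 2 / (2 * c) = (c / 2) * ‖v‖ ^ 2 + a ^ 2 / (2 * c) - a * ‖v‖ := by
    field_simp
    ring
  linarith

theorem dwd_semisupervised_posterior_proper_general (d no nu n : ℕ)
    (hno : 0 < no) (hntot : n = no + nu)
    (lam : ℝ) (hlam : 0 < lam) (P₁ : ℝ) (hP₁ : P₁ ∈ Set.Icc (0:ℝ) 1)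
    (x : Fin no → EuclideanSpace ℝ (Fin d))
    (y : Fin no → ℝ)
    (hneg : ∃ i, y i = -1) (hpos : ∃ j, y j = 1)
    (xu : Fin nu → EuclideanSpace ℝ (Fin d)) :
    Integrable (fun p : ℝ × EuclideanSpace ℝ (Fin d) =>
      (∏ i, (P₁ * Real.exp (-V (p.1 + ⟪xu i, p.2⟫)) +
          (1 - P₁) * Real.exp (-V (-p.1 - ⟪xu i, p.2⟫)))) *
        (∏ i, Real.exp (-V (y i * (p.1 + ⟪x i, p.2⟫)))) *
          Real.exp (-(lam * n / 2) * ‖p.2‖^2)) := by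
  obtain ⟨i, hi⟩ := hneg
  obtain ⟨j, hj⟩ := hpos
  have hc : 0 < lam * n / 2 := by
    have : (0 : ℝ) < n := by exact_mod_cast (by omega : 0 < n)
    positivity
  have hdom := (integrable_exp_neg_mul_abs (b := 1 / 2) (by norm_num)).mul_prod
    (integrable_exp_mul_norm_sub_mul_sq_norm (E := EuclideanSpace ℝ (Fin d))
      ((‖x i‖ + ‖x j‖) / 2) hc)
  rw [← Measure.volume_eq_prod] at hdom
  refine hdom.mono' (by fun_prop) (ae_of_all _ fun ⟨t, β⟩ => ?_)
  obtain ⟨hu₀, hu₁⟩ := prod_mixture_exp_neg_V_mem_Icc hP₁ (fun k => t + ⟪xu k, β⟫)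
    (fun k => -t - ⟪xu k, β⟫)
  rw [Real.norm_of_nonneg (by positivity)]
  calc _ ≤ 1 * Real.exp (-(1 / 2) * |t| + (‖x i‖ + ‖x j‖) / 2 * ‖β‖) *
        Real.exp (-(lam * n / 2) * ‖β‖ ^ 2) := by
        gcongr
        exact prod_exp_neg_V_margin_le x y hi hj t β
    _ = _ := by
        rw [one_mul, ← Real.exp_add, ← Real.exp_add]
        ring_nf

/-- the semi-supervised unnormalized Bayesian DWD posterior,
with `n_o` labeled observations and `n_u` unlabeled observations
(`n = n_o + n_u`), is integrable over `(β₀, β) ∈ ℝ × ℝ^d`. -/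
theorem dwd_semisupervised_posterior_proper (d no nu n : ℕ)
    (hd : 0 < d) (hno : 0 < no) (hnu : 0 < nu) (hntot : n = no + nu)
    (lam : ℝ) (hlam : 0 < lam) (P₁ : ℝ) (hP₁ : P₁ ∈ Set.Icc (0:ℝ) 1)
    (x : Fin no → EuclideanSpace ℝ (Fin d))
    (y : Fin no → ℝ) (hy : ∀ i, y i = -1 ∨ y i = 1)
    (hneg : ∃ i, y i = -1) (hpos : ∃ j, y j = 1)
    (xu : Fin nu → EuclideanSpace ℝ (Fin d)) :
    Integrable (fun p : ℝ × EuclideanSpace ℝ (Fin d) =>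
      (∏ i, (P₁ * Real.exp (-V (p.1 + ⟪xu i, p.2⟫)) +
          (1 - P₁) * Real.exp (-V (-p.1 - ⟪xu i, p.2⟫)))) *
        (∏ i, Real.exp (-V (y i * (p.1 + ⟪x i, p.2⟫)))) *
          Real.exp (-(lam * n / 2) * ‖p.2‖^2)) :=
  dwd_semisupervised_posterior_proper_general d no nu n hno hntot lam hlam P₁ hP₁ x y hneg hpos xu
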